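/- arXiv:1204.4565 — 4 statements merged into one kernel-verified Lean document; each statement's English description precedes it below -/
import Mathlib

section
/- Let B ⊆ V be a set of vertices (the Byzantine processors) and let c > 0 be an integer. Let V_c = { v ∈ V : for every b ∈ B, the graph distance between v and b in G is strictly greater than c }. Suppose the configuration pref is c-contained, i.e., every v ∈ V_c satisfies spec(v). Let V* = V_c ∪ { v ∈ V \ V_c : ∃ u ∈ V_c, pref v = some u ∧ pref u = some v }. Then the set of edges of M(pref) having both endpoints in V* is a maximal matching of the subgraph of G induced by V*. -/
variable {V : Type*} [Fintype V] [DecidableEq V]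

/-- A configuration: every preference points to a neighbor. -/
def IsConfig (G : SimpleGraph V) (pref : V → Option V) : Prop :=
  ∀ v u : V, pref v = some u → G.Adj v u

/-- `v` proposed to a neighbor `u` which has not answered yet. -/
def Proposition (G : SimpleGraph V) (pref : V → Option V) (v : V) : Prop :=
  ∃ u : V, G.Adj v u ∧ pref v = some u ∧ pref u = none

/-- `v` proposed to a neighbor `u` which proposed `v` back. -/
def Married (G : SimpleGraph V) (pref : V → Option V) (v : V) : Prop :=
  ∃ u : V, G.Adj v u ∧ pref v = some u ∧ pref u = some v

/-- `v` proposed to a neighbor `u` which proposed someone else. -/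
def Condemned (G : SimpleGraph V) (pref : V → Option V) (v : V) : Prop :=
  ∃ u : V, G.Adj v u ∧ ∃ w : V, pref v = some u ∧ pref u = some w ∧ w ≠ v

/-- `v` has no hope of marriage: all its neighbors are married. -/
def Dead (G : SimpleGraph V) (pref : V → Option V) (v : V) : Prop :=
  pref v = none ∧ ∀ u : V, G.Adj v u → Married G pref u

/-- `v` proposed no one and some neighbor is not married. -/
def Single (G : SimpleGraph V) (pref : V → Option V) (v : V) : Prop :=
  pref v = none ∧ ∃ u : V, G.Adj v u ∧ ¬ Married G pref u

/-- Local legitimacy predicate. -/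
def Spec (G : SimpleGraph V) (pref : V → Option V) (v : V) : Prop :=
  Married G pref v ∨ Dead G pref v

/-- The matching set `M(pref)`: edges of `G` whose endpoints prefer each other. -/
def matchSet (G : SimpleGraph V) (pref : V → Option V) : Set (Sym2 V) :=
  {e | e ∈ G.edgeSet ∧ ∃ u w : V, e = s(u, w) ∧ pref u = some w ∧ pref w = some u}

/-- `M` is a matching of `H`: a set of edges of `H` such that every vertex is
incident to at most one edge of `M`. -/
def IsMatchingOf (H : SimpleGraph V) (M : Set (Sym2 V)) : Prop :=
  M ⊆ H.edgeSet ∧ ∀ v : V, ∀ e ∈ M, ∀ f ∈ M, v ∈ e → v ∈ f → e = f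

/-- `M` is a maximal matching of `H`: no matching of `H` strictly contains it. -/
def IsMaximalMatchingOf (H : SimpleGraph V) (M : Set (Sym2 V)) : Prop :=
  IsMatchingOf H M ∧ ¬ ∃ M' : Set (Sym2 V), IsMatchingOf H M' ∧ M ⊂ M'

/-- The subgraph of `G` induced by the vertex set `S` (as a graph on `V`). -/
def inducedOn (G : SimpleGraph V) (S : Set V) : SimpleGraph V where
  Adj u v := G.Adj u v ∧ u ∈ S ∧ v ∈ S
  symm := ⟨fun u v ⟨h, hu, hv⟩ => ⟨h.symm, hv, hu⟩⟩
  loopless := ⟨fun v ⟨h, _, _⟩ => G.loopless.irrefl v h⟩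

/-- Guard of the marriage rule of SSMM. -/
def GuardM (G : SimpleGraph V) (pref : V → Option V) (v : V) : Prop :=
  pref v = none ∧ ∃ u : V, G.Adj v u ∧ pref u = some v

/-- Guard of the seduction rule of SSMM. -/
def GuardS (G : SimpleGraph V) (pref : V → Option V) (v : V) : Prop :=
  pref v = none ∧ (∀ u : V, G.Adj v u → pref u ≠ some v) ∧
    ∃ u : V, G.Adj v u ∧ pref u = none

/-- Guard of the abandonment rule of SSMM. -/
def GuardA (G : SimpleGraph V) (pref : V → Option V) (v : V) : Prop :=
  ∃ u : V, G.Adj v u ∧ pref v = some u ∧ pref u ≠ some v ∧ pref u ≠ none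

/-- A vertex is activable if at least one guard of SSMM holds at it. -/
def Activable (G : SimpleGraph V) (pref : V → Option V) (v : V) : Prop :=
  GuardM G pref v ∨ GuardS G pref v ∨ GuardA G pref v

/-
Every vertex of `V*` is married or dead, and the partner of a married vertex of `V*` lies in
`V*` again. Hence every edge of the induced graph on `V*` touches a married vertex, whose
marriage edge belongs to the restricted matching set; a matching meeting every edge is maximal.
-/

theorem IsMatchingOf.isMaximalMatchingOf {H : SimpleGraph V} {M : Set (Sym2 V)}
    (hM : IsMatchingOf H M) (hcover : ∀ e ∈ H.edgeSet, ∃ v ∈ e, ∃ f ∈ M, v ∈ f) :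
    IsMaximalMatchingOf H M := by
  refine ⟨hM, ?_⟩
  rintro ⟨M', hM', hsub, hne⟩
  obtain ⟨e, heM', heM⟩ := Set.not_subset.mp hne
  obtain ⟨v, hve, f, hfM, hvf⟩ := hcover e (hM'.1 heM')
  exact heM (hM'.2 v e heM' f (hsub hfM) hve hvf ▸ hfM)

section MatchSet

variable {G : SimpleGraph V} {pref : V → Option V}

theorem exists_eq_mk_of_mem_matchSet {e : Sym2 V} (he : e ∈ matchSet G pref) {v : V}
    (hv : v ∈ e) : ∃ p, pref v = some p ∧ e = s(v, p) := by
  obtain ⟨-, u, w, rfl, hu, hw⟩ := he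
  rcases Sym2.mem_iff.mp hv with rfl | rfl
  · exact ⟨w, hu, rfl⟩
  · exact ⟨u, hw, Sym2.eq_swap⟩

theorem mk_mem_matchSet (hconf : IsConfig G pref) {u w : V} (hu : pref u = some w)
    (hw : pref w = some u) : s(u, w) ∈ matchSet G pref :=
  ⟨hconf u w hu, u, w, rfl, hu, hw⟩

theorem isMatchingOf_restrict_matchSet (S : Set V) :
    IsMatchingOf (inducedOn G S) {e ∈ matchSet G pref | ∀ w ∈ e, w ∈ S} := by
  constructor
  · rintro e ⟨⟨he, u, w, rfl, -, -⟩, hS⟩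
    exact ⟨he, hS u (Sym2.mem_mk_left u w), hS w (Sym2.mem_mk_right u w)⟩
  · rintro v e ⟨he, -⟩ f ⟨hf, -⟩ hve hvf
    obtain ⟨p, hp, rfl⟩ := exists_eq_mk_of_mem_matchSet he hve
    obtain ⟨q, hq, rfl⟩ := exists_eq_mk_of_mem_matchSet hf hvf
    rw [Option.some_inj.mp (hp.symm.trans hq)]

theorem isMaximalMatchingOf_restrict_matchSet (hconf : IsConfig G pref) {S : Set V}
    (hspec : ∀ v ∈ S, Spec G pref v)
    (hpartner : ∀ v ∈ S, ∀ u, pref v = some u → pref u = some v → u ∈ S) :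
    IsMaximalMatchingOf (inducedOn G S) {e ∈ matchSet G pref | ∀ w ∈ e, w ∈ S} := by
  have covered : ∀ v ∈ S, Married G pref v →
      ∃ f ∈ {e ∈ matchSet G pref | ∀ w ∈ e, w ∈ S}, v ∈ f := by
    rintro v hv ⟨p, -, hvp, hpv⟩
    refine ⟨s(v, p), ⟨mk_mem_matchSet hconf hvp hpv, fun w hw => ?_⟩, Sym2.mem_mk_left v p⟩
    rcases Sym2.mem_iff.mp hw with rfl | rfl
    exacts [hv, hpartner v hv w hvp hpv]
  refine (isMatchingOf_restrict_matchSet S).isMaximalMatchingOf fun e he => ?_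
  induction e using Sym2.ind with
  | _ u v =>
  obtain ⟨huv, hu, hv⟩ := he
  rcases hspec u hu with hmarried | ⟨-, hneighbours⟩
  · exact ⟨u, Sym2.mem_mk_left u v, covered u hu hmarried⟩
  · exact ⟨v, Sym2.mem_mk_right u v, covered v hv (hneighbours v huv)⟩

end MatchSet

theorem contained_maximal_matching_general (G : SimpleGraph V)
    (pref : V → Option V) (hconf : IsConfig G pref)
    (Vc : Set V)
    (hcontained : ∀ v ∈ Vc, Spec G pref v)
    (Vstar : Set V)
    (hVstar : Vstar = Vc ∪
      {v : V | v ∉ Vc ∧ ∃ u ∈ Vc, pref v = some u ∧ pref u = some v}) :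
    IsMaximalMatchingOf (inducedOn G Vstar)
      {e ∈ matchSet G pref | ∀ w ∈ e, w ∈ Vstar} := by
  subst hVstar
  refine isMaximalMatchingOf_restrict_matchSet hconf ?_ ?_
  · rintro v (hv | ⟨-, u, -, hvu, huv⟩)
    exacts [hcontained v hv, Or.inl ⟨u, hconf v u hvu, hvu, huv⟩]
  · rintro v (hv | ⟨-, w, hw, hvw, -⟩) u hvu huv
    · by_cases hu : u ∈ Vc
      exacts [Or.inl hu, Or.inr ⟨hu, v, hv, huv, hvu⟩]
    · exact Or.inl (Option.some_inj.mp (hvw.symm.trans hvu) ▸ hw)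

/-- in a `c`-contained configuration, the restriction of `M(pref)`
to `V*` is a maximal matching of the subgraph of `G` induced by `V*`. -/
theorem contained_maximal_matching (G : SimpleGraph V) (hconn : G.Connected)
    (pref : V → Option V) (hconf : IsConfig G pref)
    (B : Set V) (c : ℕ) (hc : 0 < c)
    (Vc : Set V) (hVc : Vc = {v : V | ∀ b ∈ B, c < G.dist v b})
    (hcontained : ∀ v ∈ Vc, Spec G pref v)
    (Vstar : Set V)
    (hVstar : Vstar = Vc ∪
      {v : V | v ∉ Vc ∧ ∃ u ∈ Vc, pref v = some u ∧ pref u = some v}) :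
    IsMaximalMatchingOf (inducedOn G Vstar)
      {e ∈ matchSet G pref | ∀ w ∈ e, w ∈ Vstar} :=
  contained_maximal_matching_general G pref hconf Vc hcontained Vstar hVstar
end

section
/- For every configuration pref and every vertex v, if spec(v) holds (i.e., v is married or dead) then none of the three guards G_M(v), G_S(v), G_A(v) of the protocol SSMM is enabled at v; in particular a vertex satisfying spec is not activable. -/
variable {V : Type*} [Fintype V] [DecidableEq V]

section

omit [Fintype V] [DecidableEq V]

variable {G : SimpleGraph V} {pref : V → Option V} {u v : V}

theorem Married.pref_ne_none (h : Married G pref v) : pref v ≠ none := by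
  obtain ⟨u, -, hvu, -⟩ := h
  simp [hvu]

theorem Married.pref_eq_some_of_pref_eq_some (h : Married G pref u) (hu : pref u = some v) :
    pref v = some u := by
  obtain ⟨w, -, huw, hwu⟩ := h
  rwa [Option.some_inj.mp (hu.symm.trans huw)]

theorem Married.not_guardM (h : Married G pref v) : ¬ GuardM G pref v :=
  fun hM => h.pref_ne_none hM.1

theorem Married.not_guardS (h : Married G pref v) : ¬ GuardS G pref v :=
  fun hS => h.pref_ne_none hS.1

theorem Married.not_guardA (h : Married G pref v) : ¬ GuardA G pref v := by
  rintro ⟨u, -, hvu, hu, -⟩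
  exact hu (h.pref_eq_some_of_pref_eq_some hvu)

theorem Dead.not_guardM (h : Dead G pref v) : ¬ GuardM G pref v := by
  rintro ⟨-, u, hadj, huv⟩
  simpa [h.1] using (h.2 u hadj).pref_eq_some_of_pref_eq_some huv

theorem Dead.not_guardS (h : Dead G pref v) : ¬ GuardS G pref v := by
  rintro ⟨-, -, u, hadj, hu⟩
  exact (h.2 u hadj).pref_ne_none hu

theorem Dead.not_guardA (h : Dead G pref v) : ¬ GuardA G pref v := by
  rintro ⟨u, -, hvu, -⟩
  simp [h.1] at hvu

theorem Spec.not_guards (h : Spec G pref v) :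
    ¬ GuardM G pref v ∧ ¬ GuardS G pref v ∧ ¬ GuardA G pref v := by
  rcases h with hmarried | hdead
  · exact ⟨hmarried.not_guardM, hmarried.not_guardS, hmarried.not_guardA⟩
  · exact ⟨hdead.not_guardM, hdead.not_guardS, hdead.not_guardA⟩

theorem not_activable_iff :
    ¬ Activable G pref v ↔ ¬ GuardM G pref v ∧ ¬ GuardS G pref v ∧ ¬ GuardA G pref v := by
  simp only [Activable, not_or]

end

theorem spec_not_activable_general (G : SimpleGraph V) (pref : V → Option V)
    (v : V) (hspec : Spec G pref v) :
    (¬ GuardM G pref v ∧ ¬ GuardS G pref v ∧ ¬ GuardA G pref v) ∧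
      ¬ Activable G pref v :=
  ⟨hspec.not_guards, not_activable_iff.mpr hspec.not_guards⟩

/-- a vertex satisfying `spec` has none of the three guards of
SSMM enabled; in particular it is not activable. -/
theorem spec_not_activable (G : SimpleGraph V) (pref : V → Option V)
    (hconf : IsConfig G pref) (v : V) (hspec : Spec G pref v) :
    (¬ GuardM G pref v ∧ ¬ GuardS G pref v ∧ ¬ GuardA G pref v) ∧
      ¬ Activable G pref v :=
  spec_not_activable_general G pref v hspec
end

section
/- If a configuration pref is terminal for the protocol SSMM, i.e., no vertex of G is activable (for every vertex v none of the guards G_M(v), G_S(v), G_A(v) holds), then every vertex v of G satisfies spec(v). -/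
variable {V : Type*} [Fintype V] [DecidableEq V]

section Terminal

variable {V : Type*} {G : SimpleGraph V} {pref : V → Option V} {u v x y : V}

/-- An unanswered proposal enables the marriage rule at its target, one answered by somebody
else the abandonment rule at its source. -/
theorem pref_symm_of_not_guardM_of_not_guardA (hadj : G.Adj x y) (hxy : pref x = some y)
    (hM : ¬ GuardM G pref y) (hA : ¬ GuardA G pref x) : pref y = some x := by
  by_contra hyx
  cases hy : pref y with
  | none => exact hM ⟨hy, x, hadj.symm, hxy⟩
  | some w => exact hA ⟨y, hadj, hxy, hyx, by simp [hy]⟩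

theorem married_of_pref_eq_some (hconf : IsConfig G pref)
    (hterm : ∀ v : V, ¬ GuardM G pref v ∧ ¬ GuardS G pref v ∧ ¬ GuardA G pref v)
    (hvu : pref v = some u) : Married G pref v :=
  have hadj := hconf v u hvu
  ⟨u, hadj, hvu, pref_symm_of_not_guardM_of_not_guardA hadj hvu (hterm u).1 (hterm v).2.2⟩

theorem dead_of_not_guardM_of_not_guardS (hv : pref v = none) (hM : ¬ GuardM G pref v)
    (hS : ¬ GuardS G pref v)
    (hmarried : ∀ u w : V, pref u = some w → Married G pref u) : Dead G pref v := by
  have hunsought : ∀ u : V, G.Adj v u → pref u ≠ some v :=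
    fun u hu hc => hM ⟨hv, u, hu, hc⟩
  refine ⟨hv, fun u hu => ?_⟩
  cases hpu : pref u with
  | none => exact absurd ⟨hv, hunsought, u, hu, hpu⟩ hS
  | some w => exact hmarried u w hpu

end Terminal

/-- in a terminal configuration of SSMM (no vertex activable),
every vertex satisfies `spec`. -/
theorem terminal_spec (G : SimpleGraph V) (pref : V → Option V)
    (hconf : IsConfig G pref)
    (hterm : ∀ v : V, ¬ GuardM G pref v ∧ ¬ GuardS G pref v ∧ ¬ GuardA G pref v) :
    ∀ v : V, Spec G pref v := by
  have hmarried : ∀ u w : V, pref u = some w → Married G pref u :=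
    fun _ _ => married_of_pref_eq_some hconf hterm
  intro v
  cases hv : pref v with
  | none => exact .inr (dead_of_not_guardM_of_not_guardS hv (hterm v).1 (hterm v).2.1 hmarried)
  | some u => exact .inl (hmarried v u hv)
end

section
/- For every configuration pref and every vertex v of G, if spec(v) does not hold, then there exists a vertex w with graph distance at most 2 from v in G such that w is activable (at least one of the guards G_M(w), G_S(w), G_A(w) holds). -/
variable {V : Type*} [Fintype V] [DecidableEq V]

/-! A vertex `v` that is neither married nor dead either proposed to a neighbour `u` that does
not propose back, so that `v` abandons `u` or the free vertex `u` marries `v`; or `v` is free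
with an unmarried neighbour `u`. In the latter case `v` marries or seduces unless `u` has
proposed, and then the first dichotomy applies to `u`, one step further away. -/

section SSMM

variable {α : Type*} {G : SimpleGraph α} {pref : α → Option α}

theorem exists_reachable_dist_le_of_walk {P : α → Prop} {n : ℕ} {v w : α}
    (p : G.Walk v w) (hp : p.length ≤ n) (hw : P w) :
    ∃ w : α, G.Reachable v w ∧ G.dist v w ≤ n ∧ P w :=
  ⟨w, p.reachable, (G.dist_le p).trans hp, hw⟩

theorem guardA_or_guardM_of_not_married (hconf : IsConfig G pref) {v u : α}
    (hvu : pref v = some u) (hv : ¬ Married G pref v) :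
    GuardA G pref v ∨ GuardM G pref u := by
  have hadj : G.Adj v u := hconf v u hvu
  cases hu : pref u with
  | none => exact .inr ⟨hu, v, hadj.symm, hvu⟩
  | some w =>
    have hwv : w ≠ v := by
      rintro rfl
      exact hv ⟨u, hadj, hvu, hu⟩
    exact .inl ⟨u, hadj, hvu, by simpa [hu] using hwv, by simp [hu]⟩

theorem activable_of_pref_eq_none_of_adj {v u : α} (hv : pref v = none) (hvu : G.Adj v u)
    (hu : pref u = none) : Activable G pref v := by
  by_cases hM : ∃ x, G.Adj v x ∧ pref x = some v
  · exact .inl ⟨hv, hM⟩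
  · exact .inr (.inl ⟨hv, fun x hx hxv => hM ⟨x, hx, hxv⟩, u, hvu, hu⟩)

theorem exists_adj_not_married_of_not_dead {v : α} (hv : pref v = none)
    (hd : ¬ Dead G pref v) : ∃ u, G.Adj v u ∧ ¬ Married G pref u := by
  simpa [Dead, hv] using hd

end SSMM

/-- if `spec(v)` does not hold, then some vertex at distance at
most `2` from `v` in `G` is activable. -/
theorem not_spec_activable_within_two (G : SimpleGraph V)
    (pref : V → Option V) (hconf : IsConfig G pref) (v : V)
    (hspec : ¬ Spec G pref v) :
    ∃ w : V, G.Reachable v w ∧ G.dist v w ≤ 2 ∧ Activable G pref w := by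
  obtain ⟨hm, hd⟩ := not_or.mp hspec
  cases hv : pref v with
  | some u =>
    have hvu : G.Adj v u := hconf v u hv
    rcases guardA_or_guardM_of_not_married hconf hv hm with hA | hM
    · exact exists_reachable_dist_le_of_walk .nil (by simp) (.inr (.inr hA))
    · exact exists_reachable_dist_le_of_walk hvu.toWalk (by simp) (.inl hM)
  | none =>
    obtain ⟨u, hvu, hmu⟩ := exists_adj_not_married_of_not_dead hv hd
    cases hu : pref u with
    | none =>
      exact exists_reachable_dist_le_of_walk .nil (by simp)
        (activable_of_pref_eq_none_of_adj hv hvu hu)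
    | some w =>
      have huw : G.Adj u w := hconf u w hu
      rcases guardA_or_guardM_of_not_married hconf hu hmu with hA | hM
      · exact exists_reachable_dist_le_of_walk hvu.toWalk (by simp) (.inr (.inr hA))
      · exact exists_reachable_dist_le_of_walk (.cons hvu huw.toWalk) (by simp) (.inl hM)
end
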